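/- arXiv:math/0503728 — 2 statements merged into one kernel-verified Lean document; each statement's English description precedes it below -/
import Mathlib

section
/- Let π be a steady probability measure on 𝒢. Then for every k ∈ ℕ the expected size of the k-th generation under π equals 1, i.e. Σ_{G∈𝒢} π(G) · |{x ∈ G : |x| = k}| = 1; consequently, the expected size of the tree, Σ_{G∈𝒢} π(G)·|G|, is infinite. -/
open scoped Classical BigOperators ENNReal

/-- Vertices of rooted ordered trees: finite sequences of positive integers,
encoded as lists of natural numbers (entries are forced to be `≥ 1` by the
tree property below). -/
abbrev Vertex : Type := List ℕ

/-- `G` is a rooted ordered tree: it contains the root `[]` and, together with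
any vertex `x = (x₁,…,x_k) ≠ ∅` (whose last entry is positive), it contains
the parent `(x₁,…,x_{k−1})` and, if `x_k > 1`, also `(x₁,…,x_{k−1},x_k−1)`. -/
def IsROTree (G : Finset Vertex) : Prop :=
  ([] : Vertex) ∈ G ∧
    ∀ y ∈ G, y ≠ ([] : Vertex) →
      1 ≤ y.getLastD 0 ∧ y.dropLast ∈ G ∧
        (1 < y.getLastD 0 → y.dropLast ++ [y.getLastD 0 - 1] ∈ G)

/-- `deg(x,G)`: the number of children of `x` in `G`. -/
def degree (x : Vertex) (G : Finset Vertex) : ℕ :=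
  (G.filter fun y => y ≠ ([] : Vertex) ∧ y.dropLast = x).card

/-- the subtree of `G` rooted at `x`, i.e. `{y : x · y ∈ G}` -/
def subtreeAt (G : Finset Vertex) (x : Vertex) : Finset Vertex :=
  (G.filter fun z => x <+: z).image fun z => z.drop x.length

/-- the total weight `W(G) = Σ_{y∈G} w(deg(y,G))` -/
noncomputable def totalWeight (w : ℕ → ℝ) (G : Finset Vertex) : ℝ :=
  ∑ x ∈ G, w (degree x G)

/-- the Laplace transform `ρ̂(λ) = Σ_{k≥1} Π_{i=0}^{k−1} w(i)/(λ+w(i)) ∈ (0,∞]` -/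
noncomputable def lapRho (w : ℕ → ℝ) (lam : ℝ) : ℝ≥0∞ :=
  ∑' k : ℕ, ∏ i ∈ Finset.range (k + 1), ENNReal.ofReal (w i / (lam + w i))

/-- `λ̲ = inf {λ > 0 : ρ̂(λ) < ∞}` -/
noncomputable def lowerLam (w : ℕ → ℝ) : ℝ :=
  sInf {lam : ℝ | 0 < lam ∧ lapRho w lam ≠ ∞}

/-- Condition (M): `λ̲ < ∞` (i.e. `ρ̂` is somewhere finite) and
`lim_{λ↓λ̲} ρ̂(λ) > 1`; since `ρ̂` is nonincreasing, the right limit at `λ̲`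
equals the supremum over `λ > λ̲`. -/
def CondM (w : ℕ → ℝ) : Prop :=
  {lam : ℝ | 0 < lam ∧ lapRho w lam ≠ ∞}.Nonempty ∧
    1 < ⨆ lam ∈ Set.Ioi (lowerLam w), lapRho w lam

/-- the set `HIST(G)` of historical orderings of `G` -/
def Hist (G : Finset Vertex) : Set (List Vertex) :=
  {s : List Vertex | s.Nodup ∧ s.toFinset = G ∧
    ∀ i < s.length, IsROTree (s.take (i + 1)).toFinset}

/-- `W(G,s,i)`, the total weight of `G(s,i) = {s₀,…,s_i}` -/
noncomputable def histW (w : ℕ → ℝ) (s : List Vertex) (i : ℕ) : ℝ :=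
  totalWeight w (s.take (i + 1)).toFinset

/-- `w(G,s,i) = w(deg(parent of s_i, G(s,i−1)))`, for `1 ≤ i ≤ |G|−1` -/
noncomputable def histw (w : ℕ → ℝ) (s : List Vertex) (i : ℕ) : ℝ :=
  w (degree (s.getD i []).dropLast (s.take i).toFinset)

/-- the asymptotic degree distribution `p_w(k)` (with Malthusian parameter `lam`) -/
noncomputable def pW (w : ℕ → ℝ) (lam : ℝ) (k : ℕ) : ℝ :=
  lam / (lam + w k) * ∏ i ∈ Finset.range k, w i / (lam + w i)

/-- the asymptotic subtree distribution `π_w(G)` (with Malthusian parameter `lam`) -/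
noncomputable def piW (w : ℕ → ℝ) (lam : ℝ) (G : Finset Vertex) : ℝ :=
  ∑ᶠ s ∈ Hist G,
    lam / (lam + totalWeight w G) *
      ∏ i ∈ Finset.range (G.card - 1), histw w s (i + 1) / (lam + histW w s i)

/-- a probability measure `π` on `𝒢` is *steady* if for every `G ∈ 𝒢`,
`Σ_{H∈𝒢} π(H) · |{x ∈ H : |x| = 1, H↓x = G}| = π(G)` -/
def Steady (pi : Finset Vertex → ℝ≥0∞) : Prop :=
  ∀ G : Finset Vertex, IsROTree G →
    (∑' H : {H : Finset Vertex // IsROTree H},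
      pi H.1 * ((H.1.filter fun x => x.length = 1 ∧ subtreeAt H.1 x = G).card :
        ℝ≥0∞)) = pi G

/-!
Generation `k + 1` of a tree is the disjoint union of generation `k` of the subtrees rooted at
the children of the root. Steadiness says that these subtrees, counted with multiplicity, are
again distributed according to `π`, so the expected size of generation `k + 1` equals that of
generation `k`; generation `0` is the root alone. Since the size of a tree is the sum of the
sizes of its generations, its expectation is `∑ₖ 1 = ∞`.
-/

local notation "𝒢" => {G : Finset Vertex // IsROTree G}

def generation (G : Finset Vertex) (k : ℕ) : Finset Vertex :=
  G.filter fun x => x.length = k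

lemma mem_subtreeAt {G : Finset Vertex} {x z : Vertex} :
    z ∈ subtreeAt G x ↔ x ++ z ∈ G := by
  simp only [subtreeAt, Finset.mem_image, Finset.mem_filter]
  constructor
  · rintro ⟨_, ⟨hy, t, rfl⟩, rfl⟩
    simpa using hy
  · exact fun h => ⟨x ++ z, ⟨h, x.prefix_append z⟩, by simp⟩

lemma IsROTree.dropLast_mem {G : Finset Vertex} (hG : IsROTree G) {y : Vertex} (hy : y ∈ G) :
    y.dropLast ∈ G := by
  rcases eq_or_ne y [] with rfl | hne
  · exact hy
  · exact (hG.2 y hy hne).2.1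

lemma IsROTree.mem_of_prefix {G : Finset Vertex} (hG : IsROTree G) {l y : Vertex}
    (hl : l <+: y) (hy : y ∈ G) : l ∈ G := by
  induction y using List.reverseRecOn with
  | nil => rwa [List.prefix_nil.mp hl]
  | append_singleton y n ih =>
    rcases List.prefix_concat_iff.mp hl with rfl | hl
    · exact hy
    · exact ih hl (by simpa using hG.dropLast_mem hy)

lemma isROTree_subtreeAt {G : Finset Vertex} (hG : IsROTree G) {x : Vertex} (hx : x ∈ G) :
    IsROTree (subtreeAt G x) := by
  refine ⟨mem_subtreeAt.2 (by simpa using hx), fun y hy hne => ?_⟩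
  have hsplit : x ++ y = (x ++ y.dropLast) ++ [y.getLastD 0] := by
    rw [List.append_assoc, List.getLastD_eq_getLast?, List.getLast?_eq_some_getLast hne,
      Option.getD_some, List.dropLast_append_getLast hne]
  rw [mem_subtreeAt, hsplit] at hy
  obtain ⟨hpos, hparent, hsibling⟩ := hG.2 _ hy (by simp)
  simp only [List.getLastD_concat, List.dropLast_concat] at hpos hparent hsibling
  refine ⟨hpos, mem_subtreeAt.2 hparent, fun hlt => mem_subtreeAt.2 ?_⟩
  simpa using hsibling hlt

lemma IsROTree.generation_zero {G : Finset Vertex} (hG : IsROTree G) :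
    generation G 0 = {[]} := by
  ext y
  simp only [generation, Finset.mem_filter, Finset.mem_singleton, List.length_eq_zero_iff]
  exact ⟨And.right, by rintro rfl; exact ⟨hG.1, rfl⟩⟩

lemma card_generation_subtreeAt (G : Finset Vertex) (x : Vertex) (k : ℕ) :
    (generation (subtreeAt G x) k).card =
      ((generation G (x.length + k)).filter (x <+: ·)).card := by
  refine Finset.card_nbij' (x ++ ·) (List.drop x.length) ?_ ?_ ?_ ?_
  · intro z hz
    simp only [generation, Finset.mem_coe, Finset.mem_filter, mem_subtreeAt] at hz ⊢
    exact ⟨⟨hz.1, by simp [hz.2]⟩, x.prefix_append z⟩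
  · rintro y hy
    simp only [generation, Finset.mem_coe, Finset.mem_filter, mem_subtreeAt] at hy ⊢
    obtain ⟨⟨hyG, hlen⟩, t, rfl⟩ := hy
    simp_all
  · intro z _
    simp
  · rintro y hy
    obtain ⟨t, rfl⟩ := (Finset.mem_filter.mp hy).2
    simp

/-- Every vertex of generation `k + 1` lies below exactly one vertex of generation `1`. -/
lemma IsROTree.card_generation_succ {H : Finset Vertex} (hH : IsROTree H) (k : ℕ) :
    (generation H (k + 1)).card =
      ∑ x ∈ generation H 1, (generation (subtreeAt H x) k).card := by
  have hmaps : Set.MapsTo (List.take 1)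
      (generation H (k + 1) : Set Vertex) (generation H 1 : Set Vertex) := by
    intro y hy
    simp only [generation, Finset.mem_coe, Finset.mem_filter] at hy ⊢
    exact ⟨hH.mem_of_prefix (y.take_prefix 1) hy.1, by simp [hy.2]⟩
  rw [Finset.card_eq_sum_card_fiberwise hmaps]
  refine Finset.sum_congr rfl fun x hx => ?_
  have hx1 : x.length = 1 := (Finset.mem_filter.mp hx).2
  rw [card_generation_subtreeAt, hx1, add_comm]
  congr 1
  refine Finset.filter_congr fun y _ => ?_
  rw [List.prefix_iff_eq_take, hx1, eq_comm]

lemma Finset.sum_comp_eq_tsum_card_mul {α β : Type*} [DecidableEq β] {p : β → Prop}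
    (s : Finset α) (F : α → β) (hF : ∀ a ∈ s, p (F a)) (f : β → ℝ≥0∞) :
    ∑ a ∈ s, f (F a) = ∑' b : {b // p b}, (s.filter (F · = b)).card * f b := by
  simp_rw [Finset.card_eq_sum_ones, Nat.cast_sum, Nat.cast_one, Finset.sum_mul, one_mul,
    Finset.sum_filter]
  rw [Summable.tsum_finsetSum fun _ _ => ENNReal.summable]
  refine Finset.sum_congr rfl fun a ha => ?_
  rw [tsum_eq_single ⟨F a, hF a ha⟩ fun b hb => if_neg fun h => hb (Subtype.ext h.symm)]
  simp

lemma Steady.tsum_mul_sum_subtreeAt {pi : Finset Vertex → ℝ≥0∞} (hpi : Steady pi)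
    (f : Finset Vertex → ℝ≥0∞) :
    ∑' H : 𝒢, pi H * ∑ x ∈ generation H 1, f (subtreeAt H x) = ∑' G : 𝒢, pi G * f G := by
  calc ∑' H : 𝒢, pi H * ∑ x ∈ generation H 1, f (subtreeAt H x)
      = ∑' H : 𝒢, ∑' G : 𝒢, pi H *
          ((H.1.filter fun x => x.length = 1 ∧ subtreeAt H x = G).card : ℝ≥0∞) * f G := by
        refine tsum_congr fun H => ?_
        rw [(generation H.1 1).sum_comp_eq_tsum_card_mul _
          (fun x hx => isROTree_subtreeAt H.2 (Finset.mem_filter.mp hx).1),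
          ← ENNReal.tsum_mul_left]
        simp only [generation, Finset.filter_filter, mul_assoc]
    _ = ∑' G : 𝒢, pi G * f G := by
        rw [ENNReal.tsum_comm]
        exact tsum_congr fun G => by rw [ENNReal.tsum_mul_right, hpi G G.2]

lemma Steady.tsum_mul_card_generation_succ {pi : Finset Vertex → ℝ≥0∞} (hpi : Steady pi)
    (k : ℕ) :
    ∑' G : 𝒢, pi G * (generation G (k + 1)).card = ∑' G : 𝒢, pi G * (generation G k).card := by
  rw [← hpi.tsum_mul_sum_subtreeAt fun G => ((generation G k).card : ℝ≥0∞)]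
  refine tsum_congr fun H => ?_
  rw [H.2.card_generation_succ, Nat.cast_sum]

lemma card_eq_tsum_card_generation (G : Finset Vertex) :
    (G.card : ℝ≥0∞) = ∑' k, ((generation G k).card : ℝ≥0∞) := by
  rw [tsum_eq_sum (s := G.image List.length), Finset.card_eq_sum_card_image List.length G,
    Nat.cast_sum]
  · rfl
  · intro k hk
    simp only [generation, Finset.card_eq_zero, Nat.cast_eq_zero, Finset.filter_eq_empty_iff]
    rintro y hy rfl
    exact hk (Finset.mem_image_of_mem _ hy)

/-- For a steady probability measure `π` on `𝒢`, the expected size of the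
`k`-th generation equals 1 for every `k`; consequently the expected size of
the whole tree is infinite. -/
theorem steady_generation_size (pi : Finset Vertex → ℝ≥0∞)
    (hprob : ∑' G : {G : Finset Vertex // IsROTree G}, pi G.1 = 1)
    (hsteady : Steady pi) :
    (∀ k : ℕ,
      (∑' G : {G : Finset Vertex // IsROTree G},
        pi G.1 * ((G.1.filter fun x => x.length = k).card : ℝ≥0∞)) = 1) ∧
    (∑' G : {G : Finset Vertex // IsROTree G}, pi G.1 * (G.1.card : ℝ≥0∞)) = ∞ := by
  have hgen : ∀ k, ∑' G : 𝒢, pi G * (generation G k).card = 1 := by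
    intro k
    induction k with
    | zero =>
      simpa only [fun G : 𝒢 => G.2.generation_zero, Finset.card_singleton, Nat.cast_one,
        mul_one] using hprob
    | succ k ih => rw [hsteady.tsum_mul_card_generation_succ, ih]
  refine ⟨hgen, ?_⟩
  calc ∑' G : 𝒢, pi G * (G.1.card : ℝ≥0∞)
      = ∑' k : ℕ, ∑' G : 𝒢, pi G * (generation G k).card := by
        rw [← ENNReal.tsum_comm]
        refine tsum_congr fun G => ?_
        rw [card_eq_tsum_card_generation, ENNReal.tsum_mul_left]
    _ = ∞ := by simp_rw [hgen]; exact ENNReal.tsum_const_eq_top_of_ne_zero one_ne_zero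
end

section
/- Let β > 0 and w(k) = k + β, so that λ* = 1 + β. Then for every G ∈ 𝒢 with |G| = n + 1, π_w(G) = Σ_{s∈HIST(G)} (λ*/(λ*+W(G))) Π_{i=0}^{n−1} w(G,s,i+1)/(λ*+W(G,s,i)) admits the closed form π_w(G) = |HIST(G)| · (Π_{x∈G} (deg(x,G)−1+β)^{(deg(x,G))}) / ((1+β)^n · (n+2−(1+β)^{−1})^{(n+1)}), where x^{(k)} = Γ(x+1)/Γ(x−k+1) is the falling factorial. In particular, for β = 1: π_w(G) = (2 |HIST(G)| / (2|G|+1)!!) · Π_{x∈G} deg(x,G)!. -/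
open scoped Classical BigOperators ENNReal

/-- the falling factorial `x^{(k)} = x(x−1)⋯(x−k+1)` -/
noncomputable def fallFac (x : ℝ) (k : ℕ) : ℝ := ∏ i ∈ Finset.range k, (x - i)


/-!
For the linear weight `w(k) = k + β` the total weight of any tree `T` is
`(|T| - 1) + β |T|`, since the degrees of a tree sum to `|T| - 1`. Hence the denominators
`λ + W(G,s,i)` do not depend on the history `s`. Neither does the numerator: along any history
each vertex `x` acquires its children one at a time, contributing `w(0) w(1) ⋯ w(deg x - 1)`.
So all histories contribute the same term, `π_w(G)` is `|HIST(G)|` times it, and the closed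
forms come from writing `β (β + 1) ⋯ (β + d - 1)` as a falling factorial.
-/

open Finset

lemma List.dropLast_ne_self {α : Type*} {l : List α} (hl : l ≠ []) : l.dropLast ≠ l := by
  intro h
  have := congrArg List.length h
  simp only [List.length_dropLast] at this
  have : l.length ≠ 0 := by simpa using hl
  omega

lemma List.toFinset_take_add_one {α : Type*} [DecidableEq α] (s : List α) (d : α) {i : ℕ}
    (hi : i < s.length) : (s.take (i + 1)).toFinset = insert (s.getD i d) (s.take i).toFinset := by
  rw [List.take_add_one, List.getElem?_eq_getElem hi, List.getD_eq_getElem s d hi,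
    Option.toList_some, List.toFinset_append, Finset.union_comm]
  rfl

lemma List.Nodup.getD_notMem_take {α : Type*} {s : List α} (hs : s.Nodup) (d : α) {i : ℕ}
    (hi : i < s.length) : s.getD i d ∉ s.take i := by
  have h := hs.sublist (List.take_sublist (i + 1) s)
  rw [List.take_add_one, List.getElem?_eq_getElem hi, Option.toList_some, List.nodup_append] at h
  exact fun hmem => h.2.2 _ hmem _ (List.mem_singleton_self _) (List.getD_eq_getElem s d hi)

lemma degree_insert {v : Vertex} {T : Finset Vertex} (hv : v ∉ T) (hne : v ≠ []) (x : Vertex) :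
    degree x (insert v T) = degree x T + if v.dropLast = x then 1 else 0 := by
  unfold degree
  rw [Finset.filter_insert]
  split_ifs with hchild hparent hparent
  · rw [Finset.card_insert_of_notMem fun hc => hv (Finset.mem_filter.mp hc).1]
  · exact absurd hchild.2 hparent
  · exact absurd ⟨hne, hparent⟩ hchild
  · rfl

lemma degree_singleton (x : Vertex) : degree x {x} = 0 := by
  simp only [degree, Finset.card_eq_zero, Finset.filter_eq_empty_iff, Finset.mem_singleton]
  rintro y rfl ⟨hne, h⟩
  exact List.dropLast_ne_self hne h

namespace IsROTree

variable {G : Finset Vertex}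

lemma dropLast_mem_s19 (hG : IsROTree G) {y : Vertex} (hy : y ∈ G) (hne : y ≠ []) :
    y.dropLast ∈ G :=
  (hG.2 y hy hne).2.1

lemma degree_eq_zero_of_notMem (hG : IsROTree G) {x : Vertex} (hx : x ∉ G) : degree x G = 0 := by
  simp only [degree, Finset.card_eq_zero, Finset.filter_eq_empty_iff]
  rintro y hy ⟨hne, rfl⟩
  exact hx (hG.dropLast_mem_s19 hy hne)

lemma sum_degree (hG : IsROTree G) : ∑ x ∈ G, degree x G = G.card - 1 := by
  have hfib : ∑ x ∈ G, degree x G = (G.filter (· ≠ [])).card := by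
    rw [Finset.card_eq_sum_card_fiberwise (f := List.dropLast) (t := G)
      fun y hy => hG.dropLast_mem_s19 (Finset.mem_filter.mp hy).1 (Finset.mem_filter.mp hy).2]
    simp only [degree, Finset.filter_filter]
  rw [hfib, Finset.filter_ne', Finset.card_erase_of_mem hG.1]

end IsROTree

noncomputable def degreeWeightProd (w : ℕ → ℝ) (T : Finset Vertex) : ℝ :=
  ∏ x ∈ T, ∏ c ∈ range (degree x T), w c

lemma degreeWeightProd_singleton (w : ℕ → ℝ) (x : Vertex) : degreeWeightProd w {x} = 1 := by
  simp [degreeWeightProd, degree_singleton]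

lemma degreeWeightProd_insert_leaf (w : ℕ → ℝ) {T : Finset Vertex} {v : Vertex} (hv : v ∉ T)
    (hne : v ≠ []) (hleaf : degree v T = 0) (hp : v.dropLast ∈ T) :
    degreeWeightProd w (insert v T) = w (degree v.dropLast T) * degreeWeightProd w T := by
  have hfactor : ∀ x ∈ T, ∏ c ∈ range (degree x (insert v T)), w c =
      (∏ c ∈ range (degree x T), w c) * if v.dropLast = x then w (degree x T) else 1 := by
    intro x _
    rw [degree_insert hv hne]
    split_ifs
    · exact Finset.prod_range_succ w _
    · rw [add_zero, mul_one]
  rw [degreeWeightProd, Finset.prod_insert hv, degree_insert hv hne,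
    if_neg (List.dropLast_ne_self hne), hleaf, Finset.prod_congr rfl hfactor,
    Finset.prod_mul_distrib, Finset.prod_ite_eq T, if_pos hp, degreeWeightProd]
  simp only [add_zero, Finset.range_zero, Finset.prod_empty, one_mul, mul_comm]

lemma Hist.finite (G : Finset Vertex) : (Hist G).Finite := by
  refine (G.toList.permutations.toFinset.finite_toSet).subset fun s ⟨hnd, hs, _⟩ => ?_
  rw [Finset.mem_coe, List.mem_toFinset, List.mem_permutations]
  exact List.perm_of_nodup_nodup_toFinset_eq hnd G.nodup_toList (by rw [hs, Finset.toList_toFinset])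

section Hist

variable {G : Finset Vertex} {s : List Vertex}

lemma length_eq_card_of_mem_Hist (hs : s ∈ Hist G) : s.length = G.card := by
  rw [← hs.2.1, List.toFinset_card_of_nodup hs.1]

lemma card_take_of_mem_Hist (hs : s ∈ Hist G) {i : ℕ} (hi : i < s.length) :
    (s.take (i + 1)).toFinset.card = i + 1 := by
  rw [List.toFinset_card_of_nodup (hs.1.sublist (List.take_sublist _ _)), List.length_take]
  omega

/-- The product telescopes because each new vertex `s_{i+1}` is a leaf attached to a vertex of
`G(s,i)`. -/
lemma prod_histw_eq_degreeWeightProd_take (w : ℕ → ℝ) (hs : s ∈ Hist G) {i : ℕ}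
    (hi : i < s.length) :
    ∏ j ∈ range i, histw w s (j + 1) = degreeWeightProd w (s.take (i + 1)).toFinset := by
  obtain ⟨hnd, -, htree⟩ := hs
  induction i with
  | zero =>
    rw [Finset.prod_range_zero, List.toFinset_take_add_one s [] hi]
    exact (degreeWeightProd_singleton w _).symm
  | succ i ih =>
    set T := (s.take (i + 1)).toFinset
    set v := s.getD (i + 1) []
    have hins : (s.take (i + 2)).toFinset = insert v T := List.toFinset_take_add_one s [] hi
    have hvT : v ∉ T := fun h => hnd.getD_notMem_take [] hi (List.mem_toFinset.mp h)
    have hT : IsROTree T := htree i (by omega)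
    have hvne : v ≠ [] := fun h => hvT (h ▸ hT.1)
    have hp : v.dropLast ∈ T := by
      have hT' : IsROTree (insert v T) := hins ▸ htree (i + 1) hi
      exact (Finset.mem_insert.mp (hT'.dropLast_mem_s19 (Finset.mem_insert_self v T) hvne)).resolve_left
        (List.dropLast_ne_self hvne)
    rw [Finset.prod_range_succ, ih (by omega), hins,
      degreeWeightProd_insert_leaf w hvT hvne (hT.degree_eq_zero_of_notMem hvT) hp, mul_comm]
    rfl

lemma prod_histw_eq_degreeWeightProd (w : ℕ → ℝ) (hs : s ∈ Hist G) :
    ∏ j ∈ range (G.card - 1), histw w s (j + 1) = degreeWeightProd w G := by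
  rcases Nat.eq_zero_or_pos G.card with h0 | hpos
  · simp [Finset.card_eq_zero.mp h0, degreeWeightProd]
  · have hlen := length_eq_card_of_mem_Hist hs
    rw [prod_histw_eq_degreeWeightProd_take w hs (by omega), Nat.sub_add_cancel hpos, ← hlen,
      List.take_length, hs.2.1]

end Hist

lemma totalWeight_linear (beta : ℝ) {T : Finset Vertex} (hT : IsROTree T) :
    totalWeight (fun k => (k : ℝ) + beta) T = (T.card - 1 : ℕ) + beta * T.card := by
  rw [totalWeight, Finset.sum_add_distrib, ← Nat.cast_sum, hT.sum_degree, Finset.sum_const,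
    nsmul_eq_mul, mul_comm]

lemma histW_linear (beta : ℝ) {G : Finset Vertex} {s : List Vertex} (hs : s ∈ Hist G) {i : ℕ}
    (hi : i < s.length) : histW (fun k => (k : ℝ) + beta) s i = i + beta * (i + 1) := by
  rw [histW, totalWeight_linear beta (hs.2.2 i hi), card_take_of_mem_Hist hs hi]
  push_cast
  ring

lemma piW_linear (beta lam : ℝ) {G : Finset Vertex} (hG : IsROTree G) :
    piW (fun k => (k : ℝ) + beta) lam G = Nat.card (Hist G) *
      (lam * degreeWeightProd (fun k => (k : ℝ) + beta) G /
        ∏ i ∈ range G.card, (lam + i + beta * (i + 1))) := by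
  obtain ⟨n, hcard⟩ : ∃ n, G.card = n + 1 :=
    Nat.exists_eq_add_one_of_ne_zero (Finset.card_ne_zero_of_mem hG.1)
  have hterm : ∀ s ∈ Hist G,
      lam / (lam + totalWeight (fun k => (k : ℝ) + beta) G) *
        ∏ i ∈ range (G.card - 1), histw (fun k => (k : ℝ) + beta) s (i + 1) /
          (lam + histW (fun k => (k : ℝ) + beta) s i) =
      lam * degreeWeightProd (fun k => (k : ℝ) + beta) G /
        ∏ i ∈ range G.card, (lam + i + beta * (i + 1)) := by
    intro s hs
    have hden : ∀ i ∈ range (G.card - 1),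
        lam + histW (fun k => (k : ℝ) + beta) s i = lam + i + beta * (i + 1) := by
      intro i hi
      have hi' := Finset.mem_range.mp hi
      rw [histW_linear beta hs (by rw [length_eq_card_of_mem_Hist hs]; omega)]
      ring
    have hW : lam + totalWeight (fun k => (k : ℝ) + beta) G = lam + n + beta * (n + 1) := by
      rw [totalWeight_linear beta hG, hcard]
      push_cast
      ring
    rw [Finset.prod_div_distrib, prod_histw_eq_degreeWeightProd _ hs, Finset.prod_congr rfl hden,
      hW, hcard, Nat.add_sub_cancel, Finset.prod_range_succ, div_mul_div_comm,
      mul_comm (lam + n + _)]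
  rw [piW, finsum_mem_congr rfl hterm, finsum_mem_eq_finite_toFinset_sum _ (Hist.finite G),
    Finset.sum_const, nsmul_eq_mul, Nat.card_coe_set_eq,
    Set.ncard_eq_toFinset_card _ (Hist.finite G)]

lemma prod_range_add_eq_fallFac (x : ℝ) (k : ℕ) :
    ∏ i ∈ range k, ((i : ℝ) + x) = fallFac ((k : ℝ) - 1 + x) k := by
  rw [fallFac, ← Finset.prod_range_reflect]
  refine Finset.prod_congr rfl fun j hj => ?_
  have hjk := Finset.mem_range.mp hj
  rw [Nat.cast_sub (by omega), Nat.cast_sub (by omega)]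
  push_cast
  ring

lemma prod_range_linear_eq_pow_mul_fallFac (beta : ℝ) (hlam : 1 + beta ≠ 0) (n : ℕ) :
    ∏ i ∈ range (n + 1), (1 + beta + i + beta * (i + 1)) =
      (1 + beta) ^ (n + 1) * fallFac ((n : ℝ) + 2 - (1 + beta)⁻¹) (n + 1) := by
  have hfactor : ∀ i : ℕ,
      1 + beta + i + beta * (i + 1) = (1 + beta) * (i + (2 - (1 + beta)⁻¹)) := by
    intro i
    field_simp
    ring
  rw [Finset.prod_congr rfl fun i _ => hfactor i, Finset.prod_mul_distrib, Finset.prod_const,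
    Finset.card_range, prod_range_add_eq_fallFac]
  push_cast
  ring_nf

/-- For the linear weight `w(k) = k + β` with Malthusian parameter
`λ* = 1 + β` and a tree `G` with `|G| = n + 1`:
`π_w(G) = |HIST(G)| · Π_{x∈G}(deg(x)−1+β)^{(deg(x))} /
  ((1+β)^n (n+2−(1+β)⁻¹)^{(n+1)})`; in particular for `β = 1`,
`π_w(G) = (2|HIST(G)|/(2|G|+1)!!) Π_{x∈G} deg(x)!`. -/
theorem linear_subtree_distribution (beta : ℝ) (hbeta : 0 < beta)
    (G : Finset Vertex) (hG : IsROTree G) (n : ℕ) (hcard : G.card = n + 1) :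
    piW (fun k => (k : ℝ) + beta) (1 + beta) G =
        (Nat.card ↥(Hist G) : ℝ) *
          (∏ x ∈ G, fallFac ((degree x G : ℝ) - 1 + beta) (degree x G)) /
          ((1 + beta) ^ n * fallFac ((n : ℝ) + 2 - (1 + beta)⁻¹) (n + 1)) ∧
    piW (fun k => (k : ℝ) + 1) 2 G =
        2 * (Nat.card ↥(Hist G) : ℝ) /
            (Nat.doubleFactorial (2 * G.card + 1) : ℝ) *
          ∏ x ∈ G, (Nat.factorial (degree x G) : ℝ) := by
  constructor
  · rw [piW_linear beta (1 + beta) hG, hcard, prod_range_linear_eq_pow_mul_fallFac beta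
      (by positivity) n, degreeWeightProd,
      Finset.prod_congr rfl fun x _ => prod_range_add_eq_fallFac beta (degree x G), pow_succ',
      mul_assoc, mul_div_mul_left _ _ (by positivity), mul_div_assoc]
  · rw [show (2 : ℝ) = 1 + 1 by norm_num, piW_linear 1 (1 + 1) hG,
      Nat.doubleFactorial_eq_prod_odd, degreeWeightProd]
    simp only [← Finset.prod_range_add_one_eq_factorial, Nat.cast_prod]
    push_cast
    ring_nf
end
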